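/- arXiv:gr-qc/0312126 — 9 statements merged into one kernel-verified Lean document; each statement's English description precedes it below -/
import Mathlib

section
/- For the two-point calculus with einbein, the de Rham cohomology dimensions are dim H⁰ = 1, dim H¹ = 0, dim H² = 1. Specifically: the kernel of d on ℂ(Σ) consists exactly of constants; a 1-form f e₁ is closed iff f̄Θ + fΘ̄ = 0, whose solution space is 1-dimensional and equals the image of d on functions; and all 2-forms are closed while the image of d in 2-forms is 1-dimensional. -/
/-- `d` on functions for the two-point calculus: `d f = (f̄ − f)Θ e₁`. -/
noncomputable def twoPtD0 (Θ : Bool → ℂ) : (Bool → ℂ) →ₗ[ℂ] (Bool → ℂ) where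
  toFun f := fun x => (f (!x) - f x) * Θ x
  map_add' f g := by funext x; simp only [Pi.add_apply]; ring
  map_smul' c f := by funext x; simp only [Pi.smul_apply, smul_eq_mul, RingHom.id_apply]; ring

/-- `d` on 1-forms for the two-point calculus: `d(f e₁) = (f̄Θ + fΘ̄) e₁²`. -/
noncomputable def twoPtD1 (Θ : Bool → ℂ) : (Bool → ℂ) →ₗ[ℂ] (Bool → ℂ) where
  toFun f := fun x => f (!x) * Θ x + f x * Θ (!x)
  map_add' f g := by funext x; simp only [Pi.add_apply]; ring
  map_smul' c f := by funext x; simp only [Pi.smul_apply, smul_eq_mul, RingHom.id_apply]; ring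

/-- for the two-point calculus with einbein (nowhere-zero `Θ`), the
cohomology has `dim H⁰ = 1`, `dim H¹ = 0`, `dim H² = 1`: the closed functions are
exactly the constants (so `ker d₀` is 1-dimensional); a 1-form `f e₁` is closed iff
`f̄Θ + fΘ̄ = 0`, the closed 1-forms form a 1-dimensional space equal to the image of
`d₀`; every 2-form is closed and the exact 2-forms form a 1-dimensional subspace of
the 2-dimensional space of 2-forms. -/
theorem two_point_cohomology (Θ : Bool → ℂ) (hΘ : ∀ x, Θ x ≠ 0) :
    (∀ f : Bool → ℂ, twoPtD0 Θ f = 0 ↔ ∃ c : ℂ, ∀ x, f x = c) ∧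
    Module.finrank ℂ (LinearMap.ker (twoPtD0 Θ)) = 1 ∧
    (∀ f : Bool → ℂ, twoPtD1 Θ f = 0 ↔ ∀ x, f (!x) * Θ x + f x * Θ (!x) = 0) ∧
    LinearMap.ker (twoPtD1 Θ) = LinearMap.range (twoPtD0 Θ) ∧
    Module.finrank ℂ (LinearMap.ker (twoPtD1 Θ)) = 1 ∧
    Module.finrank ℂ (LinearMap.range (twoPtD1 Θ)) = 1 ∧
    Module.finrank ℂ ((Bool → ℂ) ⧸ LinearMap.range (twoPtD1 Θ)) = 1 := by
  -- auxiliary facts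
  classical
  have hker0 : LinearMap.ker (twoPtD0 Θ) = ℂ ∙ (fun _ => (1:ℂ)) := by
    ext f
    simp only [LinearMap.mem_ker, Submodule.mem_span_singleton]
    constructor
    · intro h
      have h0 := congrFun h false
      simp only [twoPtD0, LinearMap.coe_mk, AddHom.coe_mk, Pi.zero_apply] at h0
      have hft : f true = f false := by
        rcases mul_eq_zero.mp h0 with h' | h'
        · exact sub_eq_zero.mp h'
        · exact absurd h' (hΘ false)
      exact ⟨f false, by funext x; cases x <;> simp [hft]⟩
    · rintro ⟨a, rfl⟩
      funext x
      simp [twoPtD0]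
  have hkq : ∀ f : Bool → ℂ, twoPtD0 Θ f = 0 ↔ ∃ c : ℂ, ∀ x, f x = c := by
    intro f
    rw [← LinearMap.mem_ker, hker0, Submodule.mem_span_singleton]
    constructor
    · rintro ⟨a, rfl⟩; exact ⟨a, fun x => by simp⟩
    · rintro ⟨c, hc⟩; exact ⟨c, by funext x; simp [hc x]⟩
  set g : Bool → ℂ := fun x => Bool.rec (Θ false) (-Θ true) x with hg
  have hgf : g false = Θ false := rfl
  have hgt : g true = -Θ true := rfl
  have hgne : g ≠ 0 := fun h => hΘ false (by simpa [hgf] using congrFun h false)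
  have hker1 : LinearMap.ker (twoPtD1 Θ) = ℂ ∙ g := by
    ext f
    simp only [LinearMap.mem_ker, Submodule.mem_span_singleton]
    constructor
    · intro h
      have h0 := congrFun h false
      simp only [twoPtD1, LinearMap.coe_mk, AddHom.coe_mk, Pi.zero_apply, Bool.not_false] at h0
      refine ⟨f false / Θ false, ?_⟩
      funext x
      cases x
      · simp only [Pi.smul_apply, hgf, smul_eq_mul]
        rw [div_mul_eq_mul_div, mul_div_assoc, div_self (hΘ false), mul_one]
      · simp only [Pi.smul_apply, hgt, smul_eq_mul]
        rw [div_mul_eq_mul_div, div_eq_iff (hΘ false)]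
        linear_combination -h0
    · rintro ⟨a, rfl⟩
      funext x
      simp only [twoPtD1, LinearMap.coe_mk, AddHom.coe_mk, Pi.smul_apply, smul_eq_mul,
        Pi.zero_apply]
      cases x <;> simp only [Bool.not_false, Bool.not_true, hgf, hgt] <;> ring
  have hrange0 : LinearMap.range (twoPtD0 Θ) = ℂ ∙ g := by
    ext f
    simp only [LinearMap.mem_range, Submodule.mem_span_singleton]
    constructor
    · rintro ⟨u, rfl⟩
      refine ⟨u true - u false, ?_⟩
      funext x
      cases x <;> simp [twoPtD0, hgf, hgt] <;> ring
    · rintro ⟨a, rfl⟩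
      refine ⟨fun x => Bool.rec 0 a x, ?_⟩
      funext x
      cases x <;> simp [twoPtD0, hgf, hgt] <;> ring
  have hrange1 : LinearMap.range (twoPtD1 Θ) = ℂ ∙ (fun _ => (1:ℂ)) := by
    ext f
    simp only [LinearMap.mem_range, Submodule.mem_span_singleton]
    constructor
    · rintro ⟨u, rfl⟩
      refine ⟨u true * Θ false + u false * Θ true, ?_⟩
      funext x
      cases x <;> simp [twoPtD1] <;> ring
    · rintro ⟨a, rfl⟩
      refine ⟨fun x => Bool.rec 0 (a / Θ false) x, ?_⟩
      funext x
      cases x <;> simp [twoPtD1] <;>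
        exact div_mul_cancel₀ a (hΘ false)
  have hone : (fun _ => (1:ℂ)) ≠ (0 : Bool → ℂ) := by
    intro h; simpa using congrFun h false
  have hfr1 : Module.finrank ℂ (LinearMap.range (twoPtD1 Θ)) = 1 := by
    rw [hrange1]; exact finrank_span_singleton hone
  refine ⟨hkq, ?_, ?_, ?_, ?_, hfr1, ?_⟩
  · rw [hker0]; exact finrank_span_singleton hone
  · intro f
    constructor
    · intro h x; exact congrFun h x
    · intro h; funext x; exact h x
  · rw [hker1, hrange0]
  · rw [hker1]; exact finrank_span_singleton hgne
  · have htot : Module.finrank ℂ (Bool → ℂ) = 2 := by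
      simp [Module.finrank_pi]
    have := Submodule.finrank_quotient_add_finrank (LinearMap.range (twoPtD1 Θ))
    omega
end

section
/- For the three-point calculus on ℤ₃ with generic nowhere-zero Θ₁,Θ₂, the cohomology dimensions are dim H⁰ = 1, dim H¹ = 2, dim H² = 1: constants are the only closed functions; the space of closed 1-forms f e₁ + g e₂, characterized by −Θ₂ ∂̄²f + f ∂̄¹Θ₂ + Θ₁ ∂̄¹g − g ∂̄²Θ₁ = 0, is 4-dimensional; exact 1-forms form a 2-dimensional space; every 2-form is closed, and exact 2-forms form a 2-dimensional subspace of the 3-dimensional Ω². -/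
/-- Auxiliary linear map `f ↦ (R_c f − f)·Θ` on `ℤ₃`. -/
noncomputable def z3Shift (c : ZMod 3) (Θ : ZMod 3 → ℂ) : (ZMod 3 → ℂ) →ₗ[ℂ] (ZMod 3 → ℂ) where
  toFun f := fun x => (f (x + c) - f x) * Θ x
  map_add' f g := by funext x; simp only [Pi.add_apply]; ring
  map_smul' r f := by funext x; simp only [Pi.smul_apply, smul_eq_mul, RingHom.id_apply]; ring

/-- `d` on functions for the `ℤ₃` calculus: `df = ∂¹f e₁ + ∂²f e₂`. -/
noncomputable def z3D0 (Θ₁ Θ₂ : ZMod 3 → ℂ) :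
    (ZMod 3 → ℂ) →ₗ[ℂ] (ZMod 3 → ℂ) × (ZMod 3 → ℂ) :=
  (z3Shift 1 Θ₁).prod (z3Shift 2 Θ₂)

/-- `d` on 1-forms `f e₁ + g e₂` for the `ℤ₃` calculus:
`d(f e₁ + g e₂) = (−Θ₂∂̄²f + f∂̄¹Θ₂ + Θ₁∂̄¹g − g∂̄²Θ₁) e₁∧e₂`. -/
noncomputable def z3D1 (Θ₁ Θ₂ : ZMod 3 → ℂ) :
    ((ZMod 3 → ℂ) × (ZMod 3 → ℂ)) →ₗ[ℂ] (ZMod 3 → ℂ) where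
  toFun p := fun x => -Θ₂ x * (p.1 (x + 2) - p.1 x) + p.1 x * (Θ₂ (x + 1) - Θ₂ x)
      + Θ₁ x * (p.2 (x + 1) - p.2 x) - p.2 x * (Θ₁ (x + 2) - Θ₁ x)
  map_add' p q := by
    funext x
    simp only [Prod.fst_add, Prod.snd_add, Pi.add_apply]
    ring
  map_smul' r p := by
    funext x
    simp only [Prod.smul_fst, Prod.smul_snd, Pi.smul_apply, smul_eq_mul, RingHom.id_apply]
    ring

/-! Since `Θ₁` vanishes nowhere, `df = 0` forces `f` to be invariant under the generator
`x ↦ x + 1` of `ℤ₃`, so `ker d = ℂ·1`. Every exact 2-form has zero sum over the three points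
(the sum is translation invariant), and conversely `d(δ_a e₁) = Θ₂(a + 1) (δ_a − δ_{a+1})`,
and these differences span the zero-sum functions; so `im d` on 1-forms is the 2-dimensional
space of zero-sum functions. Rank–nullity gives the other dimensions. The count holds for all
nowhere-vanishing `Θ₁, Θ₂`, so the genericity polynomial can be taken to be `1`. -/

theorem ZMod.apply_eq_apply_zero_of_periodic {n : ℕ} {α : Type*} {f : ZMod n → α}
    (hf : Function.Periodic f 1) (x : ZMod n) : f x = f 0 := by
  obtain ⟨k, rfl⟩ := ZMod.intCast_surjective x
  simpa using hf.int_mul_eq k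

theorem ZMod.eq_zero_or_eq_one_or_eq_two (x : ZMod 3) : x = 0 ∨ x = 1 ∨ x = 2 := by
  revert x
  decide

theorem Fintype.finrank_ker_sum_proj {ι K : Type*} [Fintype ι] [Nonempty ι] [Field K] :
    Module.finrank K (LinearMap.ker (∑ i, LinearMap.proj i : (ι → K) →ₗ[K] K)) =
      Fintype.card ι - 1 := by
  classical
  have hsurj : Function.Surjective (∑ i, LinearMap.proj i : (ι → K) →ₗ[K] K) :=
    fun c => ⟨Pi.single (Classical.arbitrary ι) c, by simp⟩
  have h := LinearMap.finrank_range_add_finrank_ker (∑ i, LinearMap.proj i : (ι → K) →ₗ[K] K)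
  rw [LinearMap.range_eq_top.mpr hsurj, finrank_top, Module.finrank_self,
    Module.finrank_fintype_fun_eq_card] at h
  omega

theorem mem_ker_z3Shift_iff {c : ZMod 3} {Θ : ZMod 3 → ℂ} (hΘ : ∀ x, Θ x ≠ 0)
    {f : ZMod 3 → ℂ} : f ∈ LinearMap.ker (z3Shift c Θ) ↔ Function.Periodic f c := by
  simp only [LinearMap.mem_ker, funext_iff, z3Shift, LinearMap.coe_mk, AddHom.coe_mk,
    Pi.zero_apply, mul_eq_zero, hΘ, or_false, sub_eq_zero, Function.Periodic]

theorem ker_z3D0 {Θ₁ : ZMod 3 → ℂ} (h₁ : ∀ x, Θ₁ x ≠ 0) (Θ₂ : ZMod 3 → ℂ) :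
    LinearMap.ker (z3D0 Θ₁ Θ₂) = Submodule.span ℂ {1} := by
  refine le_antisymm (fun f hf => ?_) ?_
  · rw [z3D0, LinearMap.ker_prod] at hf
    have hper : Function.Periodic f 1 := (mem_ker_z3Shift_iff h₁).mp hf.1
    refine Submodule.mem_span_singleton.mpr ⟨f 0, funext fun x => ?_⟩
    simp [ZMod.apply_eq_apply_zero_of_periodic hper x]
  · rw [Submodule.span_le, Set.singleton_subset_iff, SetLike.mem_coe, LinearMap.mem_ker]
    ext x <;> simp [z3D0, z3Shift]

theorem finrank_ker_z3D0 {Θ₁ : ZMod 3 → ℂ} (h₁ : ∀ x, Θ₁ x ≠ 0) (Θ₂ : ZMod 3 → ℂ) :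
    Module.finrank ℂ (LinearMap.ker (z3D0 Θ₁ Θ₂)) = 1 := by
  rw [ker_z3D0 h₁]
  exact finrank_span_singleton one_ne_zero

theorem z3D1_comp_z3D0 (Θ₁ Θ₂ : ZMod 3 → ℂ) : z3D1 Θ₁ Θ₂ ∘ₗ z3D0 Θ₁ Θ₂ = 0 := by
  refine LinearMap.ext fun f => funext fun x => ?_
  have h₁ : x + 2 + 1 = x := by rw [add_assoc]; exact add_eq_left.mpr rfl
  have h₂ : x + 1 + 2 = x := by rw [add_assoc]; exact add_eq_left.mpr rfl
  simp only [z3D0, z3D1, z3Shift, LinearMap.comp_apply, LinearMap.prod_apply, LinearMap.coe_mk,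
    AddHom.coe_mk, Function.prod, h₁, h₂, LinearMap.zero_apply, Pi.zero_apply]
  ring

theorem sum_mul_apply_add_two (u v : ZMod 3 → ℂ) :
    ∑ x, v x * u (x + 2) = ∑ x, v (x + 1) * u x := by
  rw [← Equiv.sum_comp (Equiv.addRight (1 : ZMod 3))]
  simp only [Equiv.coe_addRight, add_assoc, show (1 : ZMod 3) + 2 = 0 from rfl, add_zero]

theorem sum_z3D1_apply (Θ₁ Θ₂ : ZMod 3 → ℂ) (p : (ZMod 3 → ℂ) × (ZMod 3 → ℂ)) :
    ∑ x, z3D1 Θ₁ Θ₂ p x = 0 := by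
  have hsplit : ∀ x, z3D1 Θ₁ Θ₂ p x = (Θ₂ (x + 1) * p.1 x - Θ₂ x * p.1 (x + 2)) +
      (p.2 (x + 1) * Θ₁ x - p.2 x * Θ₁ (x + 2)) := fun x => by
    simp only [z3D1, LinearMap.coe_mk, AddHom.coe_mk]
    ring
  simp only [hsplit, Finset.sum_add_distrib, Finset.sum_sub_distrib, sum_mul_apply_add_two,
    sub_self, add_zero]

theorem single_apply_add_two (a x : ZMod 3) :
    (Pi.single a 1 : ZMod 3 → ℂ) (x + 2) = (Pi.single (a + 1) 1 : ZMod 3 → ℂ) x := by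
  have h : x + 2 = a ↔ x = a + 1 := by
    rw [← eq_sub_iff_add_eq, sub_eq_add_neg, show (-2 : ZMod 3) = 1 from rfl]
  simp only [Pi.single_apply, h]

theorem z3D1_single_fst (Θ₁ Θ₂ : ZMod 3 → ℂ) (a : ZMod 3) :
    z3D1 Θ₁ Θ₂ (Pi.single a 1, 0) = Θ₂ (a + 1) • (Pi.single a 1 - Pi.single (a + 1) 1) := by
  funext x
  have hfst : z3D1 Θ₁ Θ₂ (Pi.single a 1, 0) x = Θ₂ (x + 1) * (Pi.single a 1 : ZMod 3 → ℂ) x -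
      Θ₂ x * (Pi.single (a + 1) 1 : ZMod 3 → ℂ) x := by
    simp only [z3D1, LinearMap.coe_mk, AddHom.coe_mk, Pi.zero_apply, single_apply_add_two]
    ring
  rw [hfst, Pi.smul_apply, Pi.sub_apply, smul_eq_mul]
  by_cases hx : x = a
  · subst hx
    simp
  · by_cases hx' : x = a + 1
    · subst hx'
      simp
    · simp [hx, hx']

theorem ker_sum_proj_le_span_single_sub_single :
    LinearMap.ker (∑ i, LinearMap.proj i : (ZMod 3 → ℂ) →ₗ[ℂ] ℂ) ≤
      Submodule.span ℂ
        (Set.range fun a : ZMod 3 => (Pi.single a 1 - Pi.single (a + 1) 1 : ZMod 3 → ℂ)) := by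
  intro f hf
  have hsum : f 0 + f 1 + f 2 = 0 := by
    have hf' : ∑ x, f x = 0 := by simpa [LinearMap.mem_ker] using hf
    rwa [show ∑ x, f x = f 0 + f 1 + f 2 from Fin.sum_univ_three f] at hf'
  have hdecomp : f = f 0 • ((Pi.single 0 1 : ZMod 3 → ℂ) - Pi.single (0 + 1) 1) +
      (f 0 + f 1) • ((Pi.single 1 1 : ZMod 3 → ℂ) - Pi.single (1 + 1) 1) := by
    funext x
    simp only [Pi.add_apply, Pi.smul_apply, Pi.sub_apply, Pi.single_apply, smul_eq_mul]
    rcases ZMod.eq_zero_or_eq_one_or_eq_two x with rfl | rfl | rfl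
    · simp +decide
    · simp +decide
    · simp +decide only [↓reduceIte]
      linear_combination hsum
  rw [hdecomp]
  exact add_mem (Submodule.smul_mem _ _ (Submodule.subset_span ⟨0, rfl⟩))
    (Submodule.smul_mem _ _ (Submodule.subset_span ⟨1, rfl⟩))

theorem range_z3D1 (Θ₁ : ZMod 3 → ℂ) {Θ₂ : ZMod 3 → ℂ} (h₂ : ∀ x, Θ₂ x ≠ 0) :
    LinearMap.range (z3D1 Θ₁ Θ₂) = LinearMap.ker (∑ i, LinearMap.proj i) := by
  refine le_antisymm ?_ (ker_sum_proj_le_span_single_sub_single.trans ?_)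
  · rintro _ ⟨p, rfl⟩
    simpa [LinearMap.mem_ker] using sum_z3D1_apply Θ₁ Θ₂ p
  · rw [Submodule.span_le]
    rintro _ ⟨a, rfl⟩
    refine ⟨(Θ₂ (a + 1))⁻¹ • (Pi.single a 1, 0), ?_⟩
    rw [map_smul, z3D1_single_fst, smul_smul, inv_mul_cancel₀ (h₂ _), one_smul]

theorem finrank_range_z3D1 (Θ₁ : ZMod 3 → ℂ) {Θ₂ : ZMod 3 → ℂ} (h₂ : ∀ x, Θ₂ x ≠ 0) :
    Module.finrank ℂ (LinearMap.range (z3D1 Θ₁ Θ₂)) = 2 := by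
  rw [range_z3D1 Θ₁ h₂, Fintype.finrank_ker_sum_proj, ZMod.card]

/-- for the three-point (`ℤ₃`) calculus with generic nowhere-zero
`Θ₁, Θ₂` (genericity = nonvanishing of some fixed nonzero polynomial in the six
values of `Θ₁, Θ₂`, i.e. a Zariski-open dense subset of `(ℂ*)³ × (ℂ*)³`), the
cohomology dimensions are `dim H⁰ = 1`, `dim H¹ = 2`, `dim H² = 1`: constants are
the only closed functions; closed 1-forms form a 4-dimensional space; exact 1-forms
a 2-dimensional space; all 2-forms are closed and exact 2-forms form a 2-dimensional
subspace of the 3-dimensional `Ω²`. -/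
theorem three_point_cohomology_generic :
    ∃ P : MvPolynomial (ZMod 3 ⊕ ZMod 3) ℂ, P ≠ 0 ∧
      (∃ Θ₁ Θ₂ : ZMod 3 → ℂ, (∀ x, Θ₁ x ≠ 0) ∧ (∀ x, Θ₂ x ≠ 0) ∧
        MvPolynomial.eval (Sum.elim Θ₁ Θ₂) P ≠ 0) ∧
      ∀ Θ₁ Θ₂ : ZMod 3 → ℂ, (∀ x, Θ₁ x ≠ 0) → (∀ x, Θ₂ x ≠ 0) →
        MvPolynomial.eval (Sum.elim Θ₁ Θ₂) P ≠ 0 →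
        Module.finrank ℂ (LinearMap.ker (z3D0 Θ₁ Θ₂)) = 1 ∧
        Module.finrank ℂ (LinearMap.range (z3D0 Θ₁ Θ₂)) = 2 ∧
        Module.finrank ℂ (LinearMap.ker (z3D1 Θ₁ Θ₂)) = 4 ∧
        LinearMap.range (z3D0 Θ₁ Θ₂) ≤ LinearMap.ker (z3D1 Θ₁ Θ₂) ∧
        Module.finrank ℂ (LinearMap.range (z3D1 Θ₁ Θ₂)) = 2 := by
  refine ⟨1, one_ne_zero, ⟨1, 1, fun _ => one_ne_zero, fun _ => one_ne_zero, by simp⟩,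
    fun Θ₁ Θ₂ h₁ h₂ _ => ?_⟩
  have hker₀ := finrank_ker_z3D0 h₁ Θ₂
  have hrange₁ := finrank_range_z3D1 Θ₁ h₂
  have hΩ₀ : Module.finrank ℂ (ZMod 3 → ℂ) = 3 := by simp
  refine ⟨hker₀, ?_, ?_, LinearMap.range_le_ker_iff.mpr (z3D1_comp_z3D0 Θ₁ Θ₂), hrange₁⟩
  · have := (z3D0 Θ₁ Θ₂).finrank_range_add_finrank_ker
    rw [hΩ₀, hker₀] at this
    omega
  · have := (z3D1 Θ₁ Θ₂).finrank_range_add_finrank_ker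
    rw [Module.finrank_prod, hΩ₀, hrange₁] at this
    omega
end

section
/- On ℤ₃ (three points with universal calculus), framed by S₂ acting by flipping e₁ ↔ e₂: a torsion-free cotorsion-free spin connection A = a e₁ + b e₂ exists iff the zweibein satisfies Θ₁ + R₁Θ₂ = ⟨Θ₁ + Θ₂⟩ (the average over the three points), and in that case the solutions form the 1-parameter family a = Θ₁ − λ, b = −R₂Θ₁ + λ, λ ∈ ℂ. In particular the operator id + R₁ is invertible on functions on ℤ₃. -/
/-- on `ℤ₃` (three points, universal calculus) framed by `S₂` flipping
`e₁ ↔ e₂`, a torsion-free cotorsion-free spin connection `A = a e₁ + b e₂` (system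
`∂̄¹Θ₂ = ∂̄²Θ₁ = −(a+b) = R₂a + R₁b`) exists iff the zweibein satisfies
`Θ₁ + R₁Θ₂ = ⟨Θ₁ + Θ₂⟩` (average over the three points); in that case the solutions
are exactly the 1-parameter family `a = Θ₁ − λ`, `b = −R₂Θ₁ + λ`, `λ ∈ ℂ`.
In particular `id + R₁` is invertible on functions on `ℤ₃`. -/
theorem three_point_S2_connection_moduli (Θ₁ Θ₂ : ZMod 3 → ℂ)
    (h1 : ∀ x, Θ₁ x ≠ 0) (h2 : ∀ x, Θ₂ x ≠ 0) :
    ((∃ a b : ZMod 3 → ℂ,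
        (∀ x, Θ₂ (x + 1) - Θ₂ x = -(a x + b x)) ∧
        (∀ x, Θ₁ (x + 2) - Θ₁ x = -(a x + b x)) ∧
        (∀ x, -(a x + b x) = a (x + 2) + b (x + 1)))
      ↔ (∀ x, Θ₁ x + Θ₂ (x + 1)
            = (Θ₁ 0 + Θ₂ 0 + Θ₁ 1 + Θ₂ 1 + Θ₁ 2 + Θ₂ 2) / 3)) ∧
    ((∀ x, Θ₁ x + Θ₂ (x + 1) = (Θ₁ 0 + Θ₂ 0 + Θ₁ 1 + Θ₂ 1 + Θ₁ 2 + Θ₂ 2) / 3) →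
      ∀ a b : ZMod 3 → ℂ,
        (((∀ x, Θ₂ (x + 1) - Θ₂ x = -(a x + b x)) ∧
          (∀ x, Θ₁ (x + 2) - Θ₁ x = -(a x + b x)) ∧
          (∀ x, -(a x + b x) = a (x + 2) + b (x + 1)))
          ↔ ∃ lam : ℂ, (∀ x, a x = Θ₁ x - lam) ∧ (∀ x, b x = -Θ₁ (x + 2) + lam))) ∧
    Function.Bijective (fun f : ZMod 3 → ℂ => fun x => f x + f (x + 1)) := by
  have tri : ∀ x : ZMod 3, x = 0 ∨ x = 1 ∨ x = 2 := by decide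
  have z01 : (0:ZMod 3)+1 = 1 := by decide
  have z02 : (0:ZMod 3)+2 = 2 := by decide
  have z11 : (1:ZMod 3)+1 = 2 := by decide
  have z12 : (1:ZMod 3)+2 = 0 := by decide
  have z21 : (2:ZMod 3)+1 = 0 := by decide
  have z22 : (2:ZMod 3)+2 = 1 := by decide
  have p11 : ∀ x : ZMod 3, x+1+1 = x+2 := by decide
  have p21 : ∀ x : ZMod 3, x+2+1 = x := by decide
  have p12 : ∀ x : ZMod 3, x+1+2 = x := by decide
  have p22 : ∀ x : ZMod 3, x+2+2 = x+1 := by decide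
  refine ⟨⟨?_, ?_⟩, ?_, ?_⟩
  · -- existence ⇒ average condition
    rintro ⟨a, b, hA, hB, hC⟩ x
    have e0 := hA 0; have e1 := hA 1; have e2 := hA 2
    have f0 := hB 0; have f1 := hB 1; have f2 := hB 2
    simp only [z01, z02, z11, z12, z21, z22] at e0 e1 e2 f0 f1 f2
    rcases tri x with h | h | h <;> subst h <;>
      simp only [z01, z02, z11, z12, z21, z22]
    · linear_combination (-(2:ℂ)*(e1-f1) - (e2-f2))/3
    · linear_combination ((e1-f1)-(e2-f2))/3
    · linear_combination ((2:ℂ)*(e2-f2)+(e1-f1))/3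
  · -- average condition ⇒ existence
    intro hcond
    refine ⟨Θ₁, fun x => -Θ₁ (x+2), ?_, ?_, ?_⟩
    · intro x
      have hc1 := hcond x
      have hc2 := hcond (x+2)
      rw [p21] at hc2
      linear_combination hc1 - hc2
    · intro x; ring
    · intro x
      simp only [p12]
      ring
  · -- moduli of solutions
    intro hcond a b
    constructor
    · rintro ⟨hA, hB, hC⟩
      have hb0 : b 0 = Θ₁ 0 - Θ₁ 2 - a 0 := by
        have := hB 0; simp only [z02] at this; linear_combination this
      have hb1 : b 1 = Θ₁ 1 - Θ₁ 0 - a 1 := by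
        have := hB 1; simp only [z12] at this; linear_combination this
      have hb2 : b 2 = Θ₁ 2 - Θ₁ 1 - a 2 := by
        have := hB 2; simp only [z22] at this; linear_combination this
      have l21 : Θ₁ 2 - a 2 = Θ₁ 1 - a 1 := by
        have := hC 0; simp only [z01, z02] at this
        rw [hb0, hb1] at this; linear_combination this
      have l02 : Θ₁ 0 - a 0 = Θ₁ 2 - a 2 := by
        have := hC 1; simp only [z11, z12] at this
        rw [hb1, hb2] at this; linear_combination this
      refine ⟨Θ₁ 0 - a 0, ?_, ?_⟩
      · intro x
        rcases tri x with h | h | h <;> subst h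
        · ring
        · linear_combination l21 + l02
        · linear_combination l02
      · intro x
        rcases tri x with h | h | h <;> subst h <;>
          simp only [z01, z02, z11, z12, z21, z22]
        · linear_combination hb0
        · linear_combination hb1 - l21 - l02
        · linear_combination hb2 - l02
    · rintro ⟨lam, ha, hb⟩
      refine ⟨?_, ?_, ?_⟩
      · intro x
        rw [ha x, hb x]
        have hc1 := hcond x
        have hc2 := hcond (x+2)
        rw [p21] at hc2
        linear_combination hc1 - hc2
      · intro x; rw [ha x, hb x]; ring
      · intro x
        rw [ha x, hb x, ha (x+2), hb (x+1), p12]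
        ring
  · -- id + R₁ invertible
    rw [Function.bijective_iff_has_inverse]
    refine ⟨fun g x => (g x - g (x+1) + g (x+2))/2, ?_, ?_⟩
    · intro f
      funext x
      simp only [p11, p21, p12, p22]
      ring
    · intro g
      funext x
      simp only [p11, p21, p12, p22]
      ring
end

section
/- For the ℤ₃ calculus framed by S₃ with connection parameters a, b and constants λ, μ (writing Θ̄₁ = Θ₁ − λ, Θ̄₂ = Θ₂ − μ), the covariant derivative satisfies full metric compatibility ∇η = 0 (with η = e₁⊗e₁ + e₂⊗e₂ + ½(e₁⊗e₂+e₂⊗e₁)) if and only if a = b = 0 and Θ̄₁ = Θ̄₂ = 0, i.e. the zweibein functions Θ₁, Θ₂ are constant. -/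
/-- for the `ℤ₃` calculus framed by `S₃` with connection parameters
`a, b` and `Θ̄₁ = Θ₁ − λ`, `Θ̄₂ = Θ₂ − μ` (written `T1, T2`), full metric
compatibility `∇η = 0` — i.e. the vanishing of all eight coefficient functions of
`∇η` listed below — holds iff `a = b = 0` and `T1 = T2 = 0`, i.e. the zweibein
functions `Θ₁, Θ₂` are constant. (`R₁h (x) = h (x+1)`, `R₂h (x) = h (x+2)`.) -/
theorem three_point_S3_metric_compatibility (a b T1 T2 : ZMod 3 → ℂ) :
    ((∀ x, 9 / 2 * a x + 4 * T2 (x + 1) + T1 x / 2 = 0) ∧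
     (∀ x, 2 * T2 (x + 1) + T1 x = 0) ∧
     (∀ x, 2 * T2 x + T1 (x + 2) = 0) ∧
     (∀ x, 2 * T1 x + T2 (x + 1) = 0) ∧
     (∀ x, T2 x + 2 * T1 (x + 2) = 0) ∧
     (∀ x, 9 / 2 * b x + 4 * T1 (x + 2) + T2 x / 2 = 0))
    ↔ (a = 0 ∧ b = 0 ∧ T1 = 0 ∧ T2 = 0) := by
  constructor
  · rintro ⟨h1, h2, h3, h4, h5, h6⟩
    have hT1 : T1 = 0 := by
      funext x
      have e1 := h2 x
      have e2 := h4 x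
      simp only [Pi.zero_apply]
      linear_combination (2 * e2 - e1) / 3
    have hT2 : T2 = 0 := by
      funext x
      have e1 := h2 (x + 2)
      have e2 := h4 (x + 2)
      have : x + 2 + 1 = x := by rw [add_assoc, show (2:ZMod 3)+1 = 0 from rfl, add_zero]
      rw [this] at e1 e2
      simp only [Pi.zero_apply]
      linear_combination (2 * e1 - e2) / 3
    subst hT1 hT2
    refine ⟨?_, ?_, rfl, rfl⟩
    · funext x
      have := h1 x
      simp only [Pi.zero_apply] at this ⊢
      linear_combination this * 2 / 9
    · funext x
      have := h6 x
      simp only [Pi.zero_apply] at this ⊢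
      linear_combination this * 2 / 9
  · rintro ⟨rfl, rfl, rfl, rfl⟩
    simp
end

section
/- On Σ = ℤ₂ × ℤ₂ with the square (torus) calculus and diagonal zweibein given by nowhere-zero Θ₁, Θ₂, the condition for d² = 0 (equivalently for the antisymmetrizer projector to define Ω²) is Θ₁ · R₁Θ₂ = Θ₂ · R₂Θ₁, where R₁, R₂ shift by (1,0), (0,1). Under this condition, d(df) = (Θ₁ R₁Θ₂ − Θ₂ R₂Θ₁)(R₁R₂ f − f) e₁∧e₂ = 0 for all f. -/
/-- on `Σ = ℤ₂ × ℤ₂` with the square (torus) calculus and diagonal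
zweibein given by nowhere-zero `Θ₁, Θ₂`, under the constraint
`Θ₁ · R₁Θ₂ = Θ₂ · R₂Θ₁` (where `R₁, R₂` shift by `(1,0), (0,1)`), the `e₁∧e₂`
coefficient of `d(df)` equals `(Θ₁R₁Θ₂ − Θ₂R₂Θ₁)(R₁R₂f − f)` and hence vanishes for
all `f`. -/
theorem torus_d_squared_zero (Θ₁ Θ₂ f : ZMod 2 × ZMod 2 → ℂ)
    (h1 : ∀ x, Θ₁ x ≠ 0) (h2 : ∀ x, Θ₂ x ≠ 0)
    (hc : ∀ x, Θ₁ x * Θ₂ (x + (1, 0)) = Θ₂ x * Θ₁ (x + (0, 1)))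
    (F G : ZMod 2 × ZMod 2 → ℂ)
    (hF : ∀ x, F x = (f (x + (1, 0)) - f x) * Θ₁ x)
    (hG : ∀ x, G x = (f (x + (0, 1)) - f x) * Θ₂ x) (x : ZMod 2 × ZMod 2) :
    (-Θ₂ x * (F (x + (0, 1)) - F x) + F x * (Θ₂ (x + (1, 0)) - Θ₂ x)
        + Θ₁ x * (G (x + (1, 0)) - G x) - G x * (Θ₁ (x + (0, 1)) - Θ₁ x)
      = (Θ₁ x * Θ₂ (x + (1, 0)) - Θ₂ x * Θ₁ (x + (0, 1))) * (f (x + (1, 1)) - f x)) ∧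
    (-Θ₂ x * (F (x + (0, 1)) - F x) + F x * (Θ₂ (x + (1, 0)) - Θ₂ x)
        + Θ₁ x * (G (x + (1, 0)) - G x) - G x * (Θ₁ (x + (0, 1)) - Θ₁ x) = 0) := by
  have e1 : x + (0, 1) + (1, 0) = x + (1, 1) := by rw [add_assoc]; norm_num
  have e2 : x + (1, 0) + (0, 1) = x + (1, 1) := by rw [add_assoc]; norm_num
  have key : -Θ₂ x * (F (x + (0, 1)) - F x) + F x * (Θ₂ (x + (1, 0)) - Θ₂ x)
        + Θ₁ x * (G (x + (1, 0)) - G x) - G x * (Θ₁ (x + (0, 1)) - Θ₁ x)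
      = (Θ₁ x * Θ₂ (x + (1, 0)) - Θ₂ x * Θ₁ (x + (0, 1))) * (f (x + (1, 1)) - f x) := by
    simp only [hF, hG, e1, e2]
    ring
  exact ⟨key, by rw [key, hc x]; ring⟩
end

section
/- For the ℤ₂×ℤ₂ torus calculus with generic Θ₁, Θ₂ satisfying Θ₁R₁Θ₂ = Θ₂R₂Θ₁, the cohomology dimensions are dim H⁰ = 1, dim H¹ = 2, dim H² = 1. In particular: ker d on functions = constants; the space of closed 1-forms f e₁ + g e₂ (those with −Θ₂∂̄²f + f∂̄¹Θ₂ + Θ₁∂̄¹g − g∂̄²Θ₁ = 0) has dimension 5 for generic Θ; exact 1-forms have dimension 3; exact 2-forms have dimension 3 within the 4-dimensional Ω². -/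
/-!
The twisted complex is gauge equivalent to the untwisted one, `δ⁰ = z22D0 1 1`,
`δ¹ = z22D1 1 1`. With `G (p, q) = (Θ₁ p, Θ₂ q)` one has `d⁰ = G ∘ δ⁰`, and the constraint says
exactly that `d¹ ∘ G = ω · δ¹` for the plaquette weight
`ω x = Θ₁ x Θ₂ (x + e₁) = Θ₂ x Θ₁ (x + e₂)`. When the `Θᵢ` vanish nowhere, `G` and
multiplication by `ω` are invertible, so all dimensions can be read off the untwisted complex,
where `ker δ⁰` is the constants and `range δ¹` is the hyperplane of functions with zero sum.
-/

/-- Auxiliary linear map `f ↦ (R_c f − f)·Θ` on `ℤ₂ × ℤ₂`. -/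
noncomputable def z22Shift (c : ZMod 2 × ZMod 2) (Θ : ZMod 2 × ZMod 2 → ℂ) :
    (ZMod 2 × ZMod 2 → ℂ) →ₗ[ℂ] (ZMod 2 × ZMod 2 → ℂ) where
  toFun f := fun x => (f (x + c) - f x) * Θ x
  map_add' f g := by funext x; simp only [Pi.add_apply]; ring
  map_smul' r f := by funext x; simp only [Pi.smul_apply, smul_eq_mul, RingHom.id_apply]; ring

/-- `d` on functions for the torus calculus on `ℤ₂ × ℤ₂`. -/
noncomputable def z22D0 (Θ₁ Θ₂ : ZMod 2 × ZMod 2 → ℂ) :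
    (ZMod 2 × ZMod 2 → ℂ) →ₗ[ℂ] (ZMod 2 × ZMod 2 → ℂ) × (ZMod 2 × ZMod 2 → ℂ) :=
  (z22Shift (1, 0) Θ₁).prod (z22Shift (0, 1) Θ₂)

/-- `d` on 1-forms `f e₁ + g e₂` for the torus calculus:
`d(f e₁ + g e₂) = (−Θ₂∂̄²f + f∂̄¹Θ₂ + Θ₁∂̄¹g − g∂̄²Θ₁) e₁∧e₂`. -/
noncomputable def z22D1 (Θ₁ Θ₂ : ZMod 2 × ZMod 2 → ℂ) :
    ((ZMod 2 × ZMod 2 → ℂ) × (ZMod 2 × ZMod 2 → ℂ)) →ₗ[ℂ] (ZMod 2 × ZMod 2 → ℂ) where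
  toFun p := fun x =>
    -Θ₂ x * (p.1 (x + (0, 1)) - p.1 x) + p.1 x * (Θ₂ (x + (1, 0)) - Θ₂ x)
      + Θ₁ x * (p.2 (x + (1, 0)) - p.2 x) - p.2 x * (Θ₁ (x + (0, 1)) - Θ₁ x)
  map_add' p q := by
    funext x
    simp only [Prod.fst_add, Prod.snd_add, Pi.add_apply]
    ring
  map_smul' r p := by
    funext x
    simp only [Prod.smul_fst, Prod.smul_snd, Pi.smul_apply, smul_eq_mul, RingHom.id_apply]
    ring

local notation "𝕋" => ZMod 2 × ZMod 2

namespace Z22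

@[simp]
lemma z22Shift_apply (c : 𝕋) (Θ f : 𝕋 → ℂ) (x : 𝕋) :
    z22Shift c Θ f x = (f (x + c) - f x) * Θ x := rfl

@[simp]
lemma z22D0_apply (Θ₁ Θ₂ f : 𝕋 → ℂ) :
    z22D0 Θ₁ Θ₂ f = (z22Shift (1, 0) Θ₁ f, z22Shift (0, 1) Θ₂ f) := rfl

lemma z22D1_apply (Θ₁ Θ₂ : 𝕋 → ℂ) (p : (𝕋 → ℂ) × (𝕋 → ℂ)) (x : 𝕋) :
    z22D1 Θ₁ Θ₂ p x = Θ₂ (x + (1, 0)) * p.1 x - Θ₂ x * p.1 (x + (0, 1))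
      + Θ₁ x * p.2 (x + (1, 0)) - Θ₁ (x + (0, 1)) * p.2 x := by
  simp only [z22D1, LinearMap.coe_mk, AddHom.coe_mk]
  ring

lemma sum_shift_sub_eq_zero {G M : Type*} [AddGroup G] [Fintype G] [AddCommGroup M]
    (f : G → M) (c : G) : ∑ x, (f (x + c) - f x) = 0 := by
  rw [Finset.sum_sub_distrib, sub_eq_zero]
  exact Equiv.sum_comp (Equiv.addRight c) f

lemma sum_univ_z22 {M : Type*} [AddCommMonoid M] (g : 𝕋 → M) :
    ∑ x, g x = g (0, 0) + g (0, 1) + g (1, 0) + g (1, 1) := by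
  rw [Fintype.sum_prod_type]
  change ∑ x : Fin 2, ∑ y : Fin 2, g (x, y) = _
  simp only [Fin.sum_univ_two, add_assoc]
  rfl

lemma finrank_fun_eq_four : Module.finrank ℂ (𝕋 → ℂ) = 4 := by
  simp [Module.finrank_fintype_fun_eq_card]

lemma eq_const_of_periodic {α : Type*} {f : 𝕋 → α} (h₁ : ∀ x, f (x + (1, 0)) = f x)
    (h₂ : ∀ x, f (x + (0, 1)) = f x) (x : 𝕋) : f x = f 0 := by
  have h10 : f (1, 0) = f 0 := h₁ 0
  have h01 : f (0, 1) = f 0 := h₂ 0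
  have h11 : f (1, 1) = f (0, 1) := h₁ (0, 1)
  fin_cases x
  exacts [rfl, h01, h10, h11.trans h01]

lemma funext_of_four_points {α : Type*} {f g : 𝕋 → α} (h00 : f (0, 0) = g (0, 0))
    (h01 : f (0, 1) = g (0, 1)) (h10 : f (1, 0) = g (1, 0)) (h11 : f (1, 1) = g (1, 1)) :
    f = g := by
  funext x
  fin_cases x
  exacts [h00, h01, h10, h11]

lemma mulLeft_bijective_of_ne_zero {ι 𝕜 : Type*} [Field 𝕜] {g : ι → 𝕜} (hg : ∀ x, g x ≠ 0) :
    Function.Bijective (LinearMap.mulLeft 𝕜 g) :=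
  IsUnit.isUnit_iff_mulLeft_bijective.mp (Pi.isUnit_iff.mpr fun x => (hg x).isUnit)

lemma ker_z22D0_one : LinearMap.ker (z22D0 1 1) = Submodule.span ℂ {1} := by
  ext f
  simp only [LinearMap.mem_ker, Submodule.mem_span_singleton, z22D0_apply, Prod.mk_eq_zero,
    funext_iff, z22Shift_apply, Pi.one_apply, mul_one, Pi.zero_apply, sub_eq_zero,
    Pi.smul_apply, smul_eq_mul]
  constructor
  · rintro ⟨h₁, h₂⟩
    exact ⟨f 0, fun x => (eq_const_of_periodic h₁ h₂ x).symm⟩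
  · rintro ⟨c, hc⟩
    simp [← hc]

def z22Sum : (𝕋 → ℂ) →ₗ[ℂ] ℂ where
  toFun g := ∑ x, g x
  map_add' _ _ := Finset.sum_add_distrib
  map_smul' _ _ := (Finset.mul_sum _ _ _).symm

lemma finrank_ker_z22Sum : Module.finrank ℂ (LinearMap.ker z22Sum) = 3 := by
  have hsurj : Function.Surjective z22Sum := fun z => ⟨Pi.single 0 z, by simp [z22Sum]⟩
  have hrn := LinearMap.finrank_range_add_finrank_ker z22Sum
  rw [LinearMap.range_eq_top.mpr hsurj, finrank_top, Module.finrank_self,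
    finrank_fun_eq_four] at hrn
  omega

lemma range_z22D1_one : LinearMap.range (z22D1 1 1) = LinearMap.ker z22Sum := by
  apply le_antisymm
  · rintro _ ⟨p, rfl⟩
    have h₁ := sum_shift_sub_eq_zero p.1 (0, 1)
    have h₂ := sum_shift_sub_eq_zero p.2 (1, 0)
    simp only [LinearMap.mem_ker, z22Sum, LinearMap.coe_mk, AddHom.coe_mk, z22D1_apply,
      Pi.one_apply, one_mul]
    calc _ = ∑ x, ((p.2 (x + (1, 0)) - p.2 x) - (p.1 (x + (0, 1)) - p.1 x)) :=
          Finset.sum_congr rfl fun x _ => by ring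
      _ = 0 := by rw [Finset.sum_sub_distrib, h₁, h₂, sub_zero]
  · intro g hg
    rw [LinearMap.mem_ker, z22Sum, LinearMap.coe_mk, AddHom.coe_mk, sum_univ_z22] at hg
    refine ⟨(Pi.single 0 (-g (0, 1)) + Pi.single (1, 0) (-g (1, 1)),
      Pi.single 0 (g (1, 0) + g (1, 1))), funext_of_four_points ?_ ?_ ?_ ?_⟩
    · simp +decide only [z22D1_apply, Pi.one_apply, Pi.add_apply, Pi.single_apply, one_mul,
        if_true, if_false]
      linear_combination -hg
    all_goals simp +decide [z22D1_apply, Pi.single_apply]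

lemma z22D1_one_comp_z22D0_one : z22D1 1 1 ∘ₗ z22D0 1 1 = 0 := by
  refine LinearMap.ext fun f => funext fun x => ?_
  simp only [LinearMap.coe_comp, Function.comp_apply, z22D1_apply, z22D0_apply,
    z22Shift_apply, Pi.one_apply, mul_one, one_mul, LinearMap.zero_apply, Pi.zero_apply]
  rw [add_right_comm x]
  ring

def z22Gauge (Θ₁ Θ₂ : 𝕋 → ℂ) : (𝕋 → ℂ) × (𝕋 → ℂ) →ₗ[ℂ] (𝕋 → ℂ) × (𝕋 → ℂ) :=
  (LinearMap.mulLeft ℂ Θ₁).prodMap (LinearMap.mulLeft ℂ Θ₂)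

variable {Θ₁ Θ₂ : 𝕋 → ℂ}

lemma z22Gauge_bijective (h₁ : ∀ x, Θ₁ x ≠ 0) (h₂ : ∀ x, Θ₂ x ≠ 0) :
    Function.Bijective (z22Gauge Θ₁ Θ₂) :=
  (mulLeft_bijective_of_ne_zero h₁).prodMap (mulLeft_bijective_of_ne_zero h₂)

lemma z22D0_eq_z22Gauge_comp : z22D0 Θ₁ Θ₂ = z22Gauge Θ₁ Θ₂ ∘ₗ z22D0 1 1 := by
  refine LinearMap.ext fun f => ?_
  ext x <;> simp only [z22D0_apply, z22Shift_apply, z22Gauge, LinearMap.coe_comp,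
    Function.comp_apply, LinearMap.prodMap_apply, LinearMap.mulLeft_apply, Pi.mul_apply,
    Pi.one_apply, mul_one] <;> ring

lemma z22D1_comp_z22Gauge (hc : ∀ x, Θ₁ x * Θ₂ (x + (1, 0)) = Θ₂ x * Θ₁ (x + (0, 1))) :
    z22D1 Θ₁ Θ₂ ∘ₗ z22Gauge Θ₁ Θ₂ =
      LinearMap.mulLeft ℂ (fun x => Θ₁ x * Θ₂ (x + (1, 0))) ∘ₗ z22D1 1 1 := by
  refine LinearMap.ext fun p => funext fun x => ?_
  simp only [z22Gauge, LinearMap.coe_comp, Function.comp_apply, LinearMap.prodMap_apply,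
    LinearMap.mulLeft_apply, z22D1_apply, Pi.mul_apply, Pi.one_apply, one_mul]
  linear_combination (p.1 (x + (0, 1)) + p.2 x) * hc x

lemma ker_z22D0 (h₁ : ∀ x, Θ₁ x ≠ 0) (h₂ : ∀ x, Θ₂ x ≠ 0) :
    LinearMap.ker (z22D0 Θ₁ Θ₂) = Submodule.span ℂ {1} := by
  rw [z22D0_eq_z22Gauge_comp, LinearMap.ker_comp_of_ker_eq_bot _
    (LinearMap.ker_eq_bot.mpr (z22Gauge_bijective h₁ h₂).1), ker_z22D0_one]

lemma finrank_range_z22D1 (h₁ : ∀ x, Θ₁ x ≠ 0) (h₂ : ∀ x, Θ₂ x ≠ 0)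
    (hc : ∀ x, Θ₁ x * Θ₂ (x + (1, 0)) = Θ₂ x * Θ₁ (x + (0, 1))) :
    Module.finrank ℂ (LinearMap.range (z22D1 Θ₁ Θ₂)) = 3 := by
  have hω : ∀ x, Θ₁ x * Θ₂ (x + (1, 0)) ≠ 0 := fun x => mul_ne_zero (h₁ x) (h₂ _)
  rw [← LinearMap.range_comp_of_range_eq_top _
      (LinearMap.range_eq_top.mpr (z22Gauge_bijective h₁ h₂).2),
    z22D1_comp_z22Gauge hc, LinearMap.range_comp, ← finrank_ker_z22Sum, ← range_z22D1_one]
  exact (Submodule.equivMapOfInjective _ (mulLeft_bijective_of_ne_zero hω).1 _).finrank_eq.symm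

lemma range_z22D0_le_ker_z22D1
    (hc : ∀ x, Θ₁ x * Θ₂ (x + (1, 0)) = Θ₂ x * Θ₁ (x + (0, 1))) :
    LinearMap.range (z22D0 Θ₁ Θ₂) ≤ LinearMap.ker (z22D1 Θ₁ Θ₂) := by
  rw [LinearMap.range_le_ker_iff, z22D0_eq_z22Gauge_comp, ← LinearMap.comp_assoc,
    z22D1_comp_z22Gauge hc, LinearMap.comp_assoc, z22D1_one_comp_z22D0_one, LinearMap.comp_zero]

end Z22

/-- for the `ℤ₂×ℤ₂` torus calculus with generic nowhere-zero `Θ₁, Θ₂`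
satisfying `Θ₁R₁Θ₂ = Θ₂R₂Θ₁` (genericity = nonvanishing of a fixed nonzero
polynomial, not identically zero on the constraint variety), the cohomology
dimensions are `dim H⁰ = 1`, `dim H¹ = 2`, `dim H² = 1`: closed functions are the
constants; closed 1-forms form a 5-dimensional space; exact 1-forms a 3-dimensional
space; exact 2-forms a 3-dimensional subspace of the 4-dimensional `Ω²`. -/
theorem torus_cohomology_generic :
    ∃ P : MvPolynomial ((ZMod 2 × ZMod 2) ⊕ (ZMod 2 × ZMod 2)) ℂ, P ≠ 0 ∧
      (∃ Θ₁ Θ₂ : ZMod 2 × ZMod 2 → ℂ, (∀ x, Θ₁ x ≠ 0) ∧ (∀ x, Θ₂ x ≠ 0) ∧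
        (∀ x, Θ₁ x * Θ₂ (x + (1, 0)) = Θ₂ x * Θ₁ (x + (0, 1))) ∧
        MvPolynomial.eval (Sum.elim Θ₁ Θ₂) P ≠ 0) ∧
      ∀ Θ₁ Θ₂ : ZMod 2 × ZMod 2 → ℂ, (∀ x, Θ₁ x ≠ 0) → (∀ x, Θ₂ x ≠ 0) →
        (∀ x, Θ₁ x * Θ₂ (x + (1, 0)) = Θ₂ x * Θ₁ (x + (0, 1))) →
        MvPolynomial.eval (Sum.elim Θ₁ Θ₂) P ≠ 0 →
        Module.finrank ℂ (LinearMap.ker (z22D0 Θ₁ Θ₂)) = 1 ∧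
        Module.finrank ℂ (LinearMap.range (z22D0 Θ₁ Θ₂)) = 3 ∧
        Module.finrank ℂ (LinearMap.ker (z22D1 Θ₁ Θ₂)) = 5 ∧
        LinearMap.range (z22D0 Θ₁ Θ₂) ≤ LinearMap.ker (z22D1 Θ₁ Θ₂) ∧
        Module.finrank ℂ (LinearMap.range (z22D1 Θ₁ Θ₂)) = 3 := by
  refine ⟨1, one_ne_zero, ⟨1, 1, fun _ => one_ne_zero, fun _ => one_ne_zero, fun _ => rfl,
    by simp⟩, ?_⟩
  intro Θ₁ Θ₂ h₁ h₂ hc _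
  have hker₀ : Module.finrank ℂ (LinearMap.ker (z22D0 Θ₁ Θ₂)) = 1 := by
    rw [Z22.ker_z22D0 h₁ h₂]
    exact finrank_span_singleton one_ne_zero
  have hrange₁ := Z22.finrank_range_z22D1 h₁ h₂ hc
  have hrank₀ := LinearMap.finrank_range_add_finrank_ker (z22D0 Θ₁ Θ₂)
  have hrank₁ := LinearMap.finrank_range_add_finrank_ker (z22D1 Θ₁ Θ₂)
  rw [Z22.finrank_fun_eq_four] at hrank₀
  rw [Module.finrank_prod, Z22.finrank_fun_eq_four] at hrank₁
  exact ⟨hker₀, by omega, by omega, Z22.range_z22D0_le_ker_z22D1 hc, hrange₁⟩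
end

section
/- On ℤ₂×ℤ₂ with torus calculus and frame group ℤ₄ (3D universal calculus on ℤ₄, with f^{1̄}, f^{2̄}, f^{3̄} acting as rotation-minus-identity on (e₁,e₂)): the simultaneous torsion-free and cotorsion-free conditions on A_{1̄} = αe₁+βe₂, A_{2̄}, A_{3̄} = γe₁+δe₂ determine A_{2̄} = ½(−α+β−γ−δ−∂̄²Θ₁)e₁ + ½(−α−β+γ−δ−∂̄¹Θ₂)e₂ together with the linear constraints (R₁+R₂)a = 0 and (R₁+R₂)b = 0, where a = γ−α, b = β−δ. The space of functions h : ℤ₂×ℤ₂ → ℂ with (R₁+R₂)h = 0 is 2-dimensional. -/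
/-- The operator `R₁ + R₂` on functions on `ℤ₂ × ℤ₂`. -/
noncomputable def z22RSum : (ZMod 2 × ZMod 2 → ℂ) →ₗ[ℂ] (ZMod 2 × ZMod 2 → ℂ) where
  toFun h := fun x => h (x + (1, 0)) + h (x + (0, 1))
  map_add' f g := by funext x; simp only [Pi.add_apply]; ring
  map_smul' r f := by funext x; simp only [Pi.smul_apply, smul_eq_mul, RingHom.id_apply]; ring

noncomputable def kerEquiv : LinearMap.ker z22RSum ≃ₗ[ℂ] ℂ × ℂ where
  toFun h := (h.1 (0,0), h.1 (1,0))
  map_add' f g := rfl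
  map_smul' r f := rfl
  invFun p := ⟨fun x => if x = (0,0) then p.1 else if x = (1,0) then p.2
      else if x = (0,1) then -p.2 else -p.1, by
    simp only [LinearMap.mem_ker]
    funext x
    show (if x + (1,0) = (0,0) then p.1 else _) + (if x + (0,1) = (0,0) then p.1 else _) = (0 : ℂ)
    rcases x with ⟨a, b⟩
    fin_cases a <;> fin_cases b <;> simp +decide⟩
  left_inv h := by
    obtain ⟨h, hh⟩ := h
    simp only [LinearMap.mem_ker] at hh
    have hv : ∀ x : ZMod 2 × ZMod 2, h (x + (1,0)) + h (x + (0,1)) = 0 := fun x => congrFun hh x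
    have h1 : h (1,0) + h (0,1) = 0 := by
      have := hv (0,0)
      rwa [show ((0,0):ZMod 2 × ZMod 2) + (1,0) = (1,0) by decide,
           show ((0,0):ZMod 2 × ZMod 2) + (0,1) = (0,1) by decide] at this
    have h2 : h (0,0) + h (1,1) = 0 := by
      have := hv (1,0)
      rwa [show ((1,0):ZMod 2 × ZMod 2) + (1,0) = (0,0) by decide,
           show ((1,0):ZMod 2 × ZMod 2) + (0,1) = (1,1) by decide] at this
    ext x
    rcases x with ⟨a, b⟩
    fin_cases a <;> fin_cases b <;> simp +decide <;>
      first
        | rfl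
        | linear_combination (-1 : ℂ) * h1
        | linear_combination (-1 : ℂ) * h2
  right_inv p := by simp


/-- on `ℤ₂×ℤ₂` with torus calculus and frame group `ℤ₄` (3D universal
calculus on `ℤ₄`), the simultaneous torsion-free and cotorsion-free conditions on
`A₁ = αe₁+βe₂`, `A₂ = A₂¹e₁+A₂²e₂`, `A₃ = γe₁+δe₂` are equivalent to
`A₂¹ = ½(−α+β−γ−δ−∂̄²Θ₁)`, `A₂² = ½(−α−β+γ−δ−∂̄¹Θ₂)` together with the linear
constraints `(R₁+R₂)(γ−α) = 0` and `(R₁+R₂)(β−δ) = 0`.  Moreover the space of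
functions `h` with `(R₁+R₂)h = 0` is 2-dimensional. -/

theorem torus_Z4_connection_moduli
    (Θ₁ Θ₂ α β A₂₁ A₂₂ γ δ : ZMod 2 × ZMod 2 → ℂ) :
    (((∀ x, α x + β x + 2 * A₂₂ x - γ x + δ x = -(Θ₂ (x + (1, 0)) - Θ₂ x)) ∧
      (∀ x, -α x + β x - 2 * A₂₁ x - γ x - δ x = Θ₁ (x + (0, 1)) - Θ₁ x) ∧
      (∀ x, -β (x + (1, 0)) + α (x + (0, 1)) - 2 * A₂₂ (x + (1, 0))
          - γ (x + (0, 1)) - δ (x + (1, 0)) = -(Θ₂ (x + (1, 0)) - Θ₂ x)) ∧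
      (∀ x, β (x + (1, 0)) + α (x + (0, 1)) + 2 * A₂₁ (x + (0, 1))
          - δ (x + (1, 0)) + γ (x + (0, 1)) = Θ₁ (x + (0, 1)) - Θ₁ x))
     ↔ ((∀ x, A₂₁ x = (-α x + β x - γ x - δ x - (Θ₁ (x + (0, 1)) - Θ₁ x)) / 2) ∧
        (∀ x, A₂₂ x = (-α x - β x + γ x - δ x - (Θ₂ (x + (1, 0)) - Θ₂ x)) / 2) ∧
        (∀ x, (γ (x + (1, 0)) - α (x + (1, 0)))
            + (γ (x + (0, 1)) - α (x + (0, 1))) = 0) ∧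
        (∀ x, (β (x + (1, 0)) - δ (x + (1, 0)))
            + (β (x + (0, 1)) - δ (x + (0, 1))) = 0))) ∧
    Module.finrank ℂ (LinearMap.ker z22RSum) = 2 := by
  have e11 : ∀ x : ZMod 2 × ZMod 2, x + (1,0) + (1,0) = x := by decide
  have e22 : ∀ x : ZMod 2 × ZMod 2, x + (0,1) + (0,1) = x := by decide
  constructor
  · constructor
    · rintro ⟨h1, h2, h3, h4⟩
      refine ⟨fun x => by linear_combination (-1/2 : ℂ) * h2 x,
              fun x => by linear_combination (1/2 : ℂ) * h1 x, fun x => ?_, fun x => ?_⟩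
      · have e := h1 (x + (1,0)); rw [e11] at e
        linear_combination -(h3 x) - e
      · have e := h2 (x + (0,1)); rw [e22] at e
        linear_combination h4 x + e
    · rintro ⟨g1, g2, c1, c2⟩
      refine ⟨fun x => by linear_combination (2 : ℂ) * g2 x,
              fun x => by linear_combination (-2 : ℂ) * g1 x, fun x => ?_, fun x => ?_⟩
      · have e := g2 (x + (1,0)); rw [e11] at e
        linear_combination (-2 : ℂ) * e - c1 x
      · have e := g1 (x + (0,1)); rw [e22] at e
        linear_combination (2 : ℂ) * e + c2 x
  · rw [kerEquiv.finrank_eq]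
    simp
end

section
/- On ℤ₂×ℤ₂ with torus calculus, ℤ₄ frame group and covariant derivative ∇e₁ = (b−∂̄²Θ₁)e₁⊗e₁ + a e₁⊗e₂ + (a−∂̄¹Θ₂)e₂⊗e₁ − b e₂⊗e₂, ∇e₂ = −a e₁⊗e₁ + (b−∂̄²Θ₁)e₁⊗e₂ + b e₂⊗e₁ + (a−∂̄¹Θ₂)e₂⊗e₂, the metric η = e₁⊗e₁+e₂⊗e₂ satisfies ∇η = 0 if and only if a = ∂̄¹Θ₂ and b = ∂̄²Θ₁, and additionally ∂̄²(∂̄¹Θ₂) = 0 and ∂̄¹(∂̄²Θ₁) = 0 (needed so that (R₁+R₂)a = (R₁+R₂)b = 0 holds). -/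
/-- on `ℤ₂×ℤ₂` with torus calculus, `ℤ₄` frame group and the covariant
derivative of Proposition 4.1 (parameters `a, b` subject to the cotorsion constraints
`(R₁+R₂)a = (R₁+R₂)b = 0`), the metric `η = e₁⊗e₁ + e₂⊗e₂` satisfies `∇η = 0` —
i.e. the coefficients `2(b − ∂̄²Θ₁)` and `2(a − ∂̄¹Θ₂)` of `∇η` all vanish — iff
`a = ∂̄¹Θ₂`, `b = ∂̄²Θ₁`, and additionally `∂̄²(∂̄¹Θ₂) = 0` and `∂̄¹(∂̄²Θ₁) = 0`. -/
theorem torus_Z4_metric_compatibility (Θ₁ Θ₂ a b : ZMod 2 × ZMod 2 → ℂ)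
    (hca : ∀ x, a (x + (1, 0)) + a (x + (0, 1)) = 0)
    (hcb : ∀ x, b (x + (1, 0)) + b (x + (0, 1)) = 0) :
    ((∀ x, 2 * (b x - (Θ₁ (x + (0, 1)) - Θ₁ x)) = 0) ∧
     (∀ x, 2 * (a x - (Θ₂ (x + (1, 0)) - Θ₂ x)) = 0))
    ↔ ((∀ x, a x = Θ₂ (x + (1, 0)) - Θ₂ x) ∧
       (∀ x, b x = Θ₁ (x + (0, 1)) - Θ₁ x) ∧
       (∀ x, (Θ₂ (x + (0, 1) + (1, 0)) - Θ₂ (x + (0, 1)))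
           - (Θ₂ (x + (1, 0)) - Θ₂ x) = 0) ∧
       (∀ x, (Θ₁ (x + (1, 0) + (0, 1)) - Θ₁ (x + (1, 0)))
           - (Θ₁ (x + (0, 1)) - Θ₁ x) = 0)) := by
  have e1 : ∀ x : ZMod 2 × ZMod 2, x + (1, 0) + (1, 0) = x := by decide
  have e2 : ∀ x : ZMod 2 × ZMod 2, x + (0, 1) + (0, 1) = x := by decide
  constructor
  · rintro ⟨hb, ha⟩
    have ha' : ∀ x, a x = Θ₂ (x + (1, 0)) - Θ₂ x := fun x => by
      have h := ha x
      have h2 : (2 : ℂ) ≠ 0 := two_ne_zero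
      have := (mul_eq_zero.mp h).resolve_left h2
      linear_combination this
    have hb' : ∀ x, b x = Θ₁ (x + (0, 1)) - Θ₁ x := fun x => by
      have h := hb x
      have h2 : (2 : ℂ) ≠ 0 := two_ne_zero
      have := (mul_eq_zero.mp h).resolve_left h2
      linear_combination this
    refine ⟨ha', hb', fun x => ?_, fun x => ?_⟩
    · have h := hca x
      rw [ha' (x + (1, 0)), ha' (x + (0, 1)), e1 x] at h
      linear_combination h
    · have h := hcb x
      rw [hb' (x + (1, 0)), hb' (x + (0, 1)), e2 x] at h
      linear_combination h
  · rintro ⟨ha, hb, _, _⟩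
    exact ⟨fun x => by rw [hb x]; ring, fun x => by rw [ha x]; ring⟩
end

section
/- On ℤ₂×ℤ₂ with torus calculus, ℤ₂×ℤ₂ translation frame group and 2D frame calculus: the Ricci scalar R = ∂¹b + ∂²a + ∂̄²Θ₁·R₁b + ∂̄¹Θ₂·R₂a − 2bR₁b − 2aR₂a (with ∂^i = Θ_i ∂̄^i) satisfies the reality property: if Θ̄_a = R_aΘ_a (conjugate), ā = R₂a, b̄ = R₁b, and (R₁+R₂)a = (R₁+R₂)b = 0, then the conjugate of R equals R plus a total divergence: R̄ = R + ∂̄¹(∂¹b + ∂̄²Θ₁ R₁b) + ∂̄²(∂²a + ∂̄¹Θ₂ R₂a). In particular Σ_{x∈ℤ₂×ℤ₂} R(x) is real. -/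
open Finset

/-- on `ℤ₂×ℤ₂` (torus calculus, `ℤ₂×ℤ₂` translation frame group, 2D
frame calculus), the Ricci scalar
`R = ∂¹b + ∂²a + ∂̄²Θ₁·R₁b + ∂̄¹Θ₂·R₂a − 2bR₁b − 2aR₂a` satisfies the reality
property: if `conj Θ₁ = R₁Θ₁`, `conj Θ₂ = R₂Θ₂`, `conj a = R₂a`, `conj b = R₁b`
and `(R₁+R₂)a = (R₁+R₂)b = 0`, then
`conj R = R + ∂̄¹(∂¹b + ∂̄²Θ₁ R₁b) + ∂̄²(∂²a + ∂̄¹Θ₂ R₂a)`;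
in particular `∑_{x} R(x)` is real. -/
theorem torus_ricci_reality (Θ₁ Θ₂ a b Ric : ZMod 2 × ZMod 2 → ℂ)
    (hΘ1 : ∀ x, (starRingEnd ℂ) (Θ₁ x) = Θ₁ (x + (1, 0)))
    (hΘ2 : ∀ x, (starRingEnd ℂ) (Θ₂ x) = Θ₂ (x + (0, 1)))
    (ha : ∀ x, (starRingEnd ℂ) (a x) = a (x + (0, 1)))
    (hb : ∀ x, (starRingEnd ℂ) (b x) = b (x + (1, 0)))
    (hca : ∀ x, a (x + (1, 0)) + a (x + (0, 1)) = 0)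
    (hcb : ∀ x, b (x + (1, 0)) + b (x + (0, 1)) = 0)
    (hR : ∀ x, Ric x =
      Θ₁ x * (b (x + (1, 0)) - b x) + Θ₂ x * (a (x + (0, 1)) - a x)
        + (Θ₁ (x + (0, 1)) - Θ₁ x) * b (x + (1, 0))
        + (Θ₂ (x + (1, 0)) - Θ₂ x) * a (x + (0, 1))
        - 2 * b x * b (x + (1, 0)) - 2 * a x * a (x + (0, 1))) :
    (∀ x, (starRingEnd ℂ) (Ric x) = Ric x
      + ((fun y => Θ₁ y * (b (y + (1, 0)) - b y)
            + (Θ₁ (y + (0, 1)) - Θ₁ y) * b (y + (1, 0))) (x + (1, 0))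
         - (fun y => Θ₁ y * (b (y + (1, 0)) - b y)
            + (Θ₁ (y + (0, 1)) - Θ₁ y) * b (y + (1, 0))) x)
      + ((fun y => Θ₂ y * (a (y + (0, 1)) - a y)
            + (Θ₂ (y + (1, 0)) - Θ₂ y) * a (y + (0, 1))) (x + (0, 1))
         - (fun y => Θ₂ y * (a (y + (0, 1)) - a y)
            + (Θ₂ (y + (1, 0)) - Θ₂ y) * a (y + (0, 1))) x)) ∧
    (starRingEnd ℂ) (∑ x : ZMod 2 × ZMod 2, Ric x) = ∑ x : ZMod 2 × ZMod 2, Ric x := by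
  have h11 : ∀ y : ZMod 2 × ZMod 2, y + (1,0) + (1,0) = y := by decide
  have h22 : ∀ y : ZMod 2 × ZMod 2, y + (0,1) + (0,1) = y := by decide
  have h12 : ∀ y : ZMod 2 × ZMod 2, y + (1,0) + (0,1) = y + (1,1) := by decide
  have h21 : ∀ y : ZMod 2 × ZMod 2, y + (0,1) + (1,0) = y + (1,1) := by decide
  have key : ∀ x, (starRingEnd ℂ) (Ric x) = Ric x
      + ((fun y => Θ₁ y * (b (y + (1, 0)) - b y)
            + (Θ₁ (y + (0, 1)) - Θ₁ y) * b (y + (1, 0))) (x + (1, 0))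
         - (fun y => Θ₁ y * (b (y + (1, 0)) - b y)
            + (Θ₁ (y + (0, 1)) - Θ₁ y) * b (y + (1, 0))) x)
      + ((fun y => Θ₂ y * (a (y + (0, 1)) - a y)
            + (Θ₂ (y + (1, 0)) - Θ₂ y) * a (y + (0, 1))) (x + (0, 1))
         - (fun y => Θ₂ y * (a (y + (0, 1)) - a y)
            + (Θ₂ (y + (1, 0)) - Θ₂ y) * a (y + (0, 1))) x) := by
    intro x
    have hA1 : a (x + (1,0)) = -a (x + (0,1)) :=
      eq_neg_of_add_eq_zero_left (hca x)
    have hA3 : a (x + (1,1)) = -a x := by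
      have := hca (x + (0,1)); rw [h21, h22] at this
      exact eq_neg_of_add_eq_zero_left this
    have hB2 : b (x + (0,1)) = -b (x + (1,0)) :=
      eq_neg_of_add_eq_zero_right (hcb x)
    have hB3 : b (x + (1,1)) = -b x := by
      have := hcb (x + (1,0)); rw [h11, h12] at this
      exact eq_neg_of_add_eq_zero_right this
    simp only [hR, map_add, map_sub, map_mul, map_ofNat, hΘ1, hΘ2, ha, hb,
      h11, h22, h12, h21, hA1, hA3, hB2, hB3]
    ring
  refine ⟨key, ?_⟩
  rw [map_sum]
  simp only [key]
  rw [Finset.sum_add_distrib, Finset.sum_add_distrib, Finset.sum_sub_distrib,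
    Finset.sum_sub_distrib]
  have s1 : ∑ x : ZMod 2 × ZMod 2,
      (Θ₁ (x + (1, 0)) * (b (x + (1, 0) + (1, 0)) - b (x + (1, 0))) +
        (Θ₁ (x + (1, 0) + (0, 1)) - Θ₁ (x + (1, 0))) * b (x + (1, 0) + (1, 0))) =
      ∑ x : ZMod 2 × ZMod 2,
      (Θ₁ x * (b (x + (1, 0)) - b x) + (Θ₁ (x + (0, 1)) - Θ₁ x) * b (x + (1, 0))) :=
    Fintype.sum_equiv (Equiv.addRight ((1, 0) : ZMod 2 × ZMod 2)) _ _ (fun x => rfl)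
  have s2 : ∑ x : ZMod 2 × ZMod 2,
      (Θ₂ (x + (0, 1)) * (a (x + (0, 1) + (0, 1)) - a (x + (0, 1))) +
        (Θ₂ (x + (0, 1) + (1, 0)) - Θ₂ (x + (0, 1))) * a (x + (0, 1) + (0, 1))) =
      ∑ x : ZMod 2 × ZMod 2,
      (Θ₂ x * (a (x + (0, 1)) - a x) + (Θ₂ (x + (1, 0)) - Θ₂ x) * a (x + (0, 1))) :=
    Fintype.sum_equiv (Equiv.addRight ((0, 1) : ZMod 2 × ZMod 2)) _ _ (fun x => rfl)
  rw [s1, s2]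
  ring
end
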